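/- arXiv:2410.09590 — 7 statements merged into one kernel-verified Lean document; each statement's English description precedes it below -/
import Mathlib

section
/- For every n ≥ 1, the set {P ∈ SO(n) : det(I + P) = 0} is a null set with respect to the Haar probability measure on the compact topological group SO(n). -/
open Matrix MeasureTheory

noncomputable instance {n : ℕ} : MeasurableSpace (Matrix (Fin n) (Fin n) ℝ) := borel _
instance {n : ℕ} : BorelSpace (Matrix (Fin n) (Fin n) ℝ) := ⟨rfl⟩

/-!
Let `S = {P | det (1 + P) = 0}` and let `R(θ)` be a rotation in a coordinate plane. Since `μ`
is invariant under `R(θ)`, the points `P` with `R(1 / (k + 1)) P ∈ S` for infinitely many `k`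
fill `S` up to a null set; for such `P` the real-analytic function `θ ↦ det (1 + R(θ) P)` has
zeros accumulating at `0`, so `R(θ) P ∈ S` for every `θ`. Iterating over words in Givens
rotations, almost every `P ∈ S` satisfies `det (1 + w P) = 0` for every product `w` of Givens
rotations. But Givens elimination finds, for each `P ∈ SO(n)`, such a `w` with `w P = 1`, and
`det (1 + 1) = 2ⁿ ≠ 0`.
-/

open Filter Topology Real Pointwise

lemma Submonoid.exists_mem_pow_of_mem_closure {M : Type*} [Monoid M] {s : Set M} {x : M}
    (hx : x ∈ Submonoid.closure s) : ∃ j : ℕ, x ∈ s ^ j := by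
  induction hx using Submonoid.closure_induction with
  | mem x hx => exact ⟨1, by rwa [pow_one]⟩
  | one => exact ⟨0, by rw [pow_zero]; exact Set.mem_one.2 rfl⟩
  | mul x y _ _ hx hy =>
    obtain ⟨i, hi⟩ := hx
    obtain ⟨j, hj⟩ := hy
    exact ⟨i + j, by rw [pow_add]; exact Set.mul_mem_mul hi hj⟩

theorem measure_sdiff_setOf_frequently_mem_eq_zero {α : Type*} [MeasurableSpace α]
    {μ : Measure α} [IsFiniteMeasure μ] {f : ℕ → α → α} {s : Set α}
    (hf : ∀ k, MeasurePreserving (f k) μ μ) (hs : MeasurableSet s)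
    (hsub : {x | ∃ᶠ k in atTop, f k x ∈ s} ⊆ s) :
    μ (s \ {x | ∃ᶠ k in atTop, f k x ∈ s}) = 0 := by
  set U : ℕ → Set α := fun N => ⋃ k ≥ N, f k ⁻¹' s
  have hU : {x | ∃ᶠ k in atTop, f k x ∈ s} = ⋂ N, U N := by
    ext x
    simp [U, frequently_atTop]
  have hUmeas : ∀ N, MeasurableSet (U N) := fun N =>
    .iUnion fun k => .iUnion fun _ => (hf k).measurable hs
  -- each tail union contains a copy `f N ⁻¹' s` of `s` of the same measure
  have hle : μ s ≤ μ (⋂ N, U N) := by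
    have hanti : Antitone U := fun N M hNM =>
      Set.iUnion₂_mono' fun k hk => ⟨k, hNM.trans hk, le_rfl⟩
    rw [hanti.measure_iInter (fun N => (hUmeas N).nullMeasurableSet) ⟨0, measure_ne_top μ _⟩]
    refine le_iInf fun N => ?_
    rw [← (hf N).measure_preimage hs.nullMeasurableSet]
    exact measure_mono (Set.subset_iUnion₂ (s := fun k (_ : k ≥ N) => f k ⁻¹' s) N le_rfl)
  rw [hU] at hsub ⊢
  rw [measure_sdiff hsub (MeasurableSet.iInter hUmeas).nullMeasurableSet (measure_ne_top μ _)]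
  exact tsub_eq_zero_of_le hle

lemma analyticAt_matrix_det {𝕜 E m : Type*} [NontriviallyNormedField 𝕜] [NormedAddCommGroup E]
    [NormedSpace 𝕜 E] [Fintype m] [DecidableEq m] {f : E → Matrix m m 𝕜} {x : E}
    (hf : ∀ a b, AnalyticAt 𝕜 (fun y => f y a b) x) :
    AnalyticAt 𝕜 (fun y => (f y).det) x := by
  simp only [det_apply']
  exact Finset.analyticAt_fun_sum _ fun σ _ =>
    analyticAt_const.mul (Finset.analyticAt_fun_prod _ fun l _ => hf _ _)

lemma exists_angle_rotating_to_nonneg_axis (x y : ℝ) :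
    ∃ θ : ℝ, 0 ≤ cos θ * x - sin θ * y ∧ sin θ * x + cos θ * y = 0 := by
  set z : ℂ := ⟨x, y⟩
  have hx : ‖z‖ * cos z.arg = x := Complex.norm_mul_cos_arg z
  have hy : ‖z‖ * sin z.arg = y := Complex.norm_mul_sin_arg z
  refine ⟨-z.arg, ?_, ?_⟩
  · rw [cos_neg, sin_neg, ← hx, ← hy]
    nlinarith [cos_sq_add_sin_sq z.arg, norm_nonneg z]
  · rw [cos_neg, sin_neg, ← hx, ← hy]
    ring

section Givens

variable {m : Type*} [DecidableEq m]

noncomputable def givensRotation (i j : m) (θ : ℝ) : Matrix m m ℝ :=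
  1 + (cos θ - 1) • (single i i 1 + single j j 1) + sin θ • (single j i 1 - single i j 1)

def givensRotations (m : Type*) [DecidableEq m] : Set (Matrix m m ℝ) :=
  {g | ∃ i j : m, ∃ θ : ℝ, i ≠ j ∧ givensRotation i j θ = g}

@[simp]
lemma givensRotation_zero (i j : m) : givensRotation i j 0 = 1 := by
  simp [givensRotation]

lemma transpose_givensRotation (i j : m) (θ : ℝ) :
    (givensRotation i j θ)ᵀ = givensRotation i j (-θ) := by
  simp only [givensRotation, transpose_add, transpose_smul, transpose_sub, transpose_one,
    transpose_single, cos_neg, sin_neg]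
  module

variable [Fintype m]

lemma givensRotation_mul_givensRotation {i j : m} (hij : i ≠ j) (θ φ : ℝ) :
    givensRotation i j θ * givensRotation i j φ = givensRotation i j (θ + φ) := by
  simp only [givensRotation, add_mul, mul_add, sub_mul, mul_sub, one_mul, mul_one,
    smul_mul_assoc, mul_smul_comm, smul_add, smul_sub, smul_smul, single_mul_single_same,
    single_mul_single_of_ne, ne_eq, hij, Ne.symm hij, not_false_eq_true, cos_add, sin_add]
  module

lemma givensRotation_mem_specialOrthogonalGroup {i j : m} (hij : i ≠ j) (θ : ℝ) :
    givensRotation i j θ ∈ specialOrthogonalGroup m ℝ := by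
  have horth : ∀ φ, (givensRotation i j φ)ᵀ * givensRotation i j φ = 1 := fun φ => by
    rw [transpose_givensRotation, givensRotation_mul_givensRotation hij, neg_add_cancel,
      givensRotation_zero]
  refine ⟨(mem_orthogonalGroup_iff' ..).2 (horth θ), ?_⟩
  -- `det R(θ) = (det R(θ/2))² = det (R(θ/2)ᵀ * R(θ/2)) = 1`
  have hsq := congrArg det (horth (θ / 2))
  rw [det_mul, det_transpose, det_one] at hsq
  change det _ = 1
  rw [← add_halves θ, ← givensRotation_mul_givensRotation hij, det_mul, hsq]

lemma givensRotation_mul_apply_left {i j : m} (hij : i ≠ j) (θ : ℝ)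
    (Q : Matrix m m ℝ) (k : m) :
    (givensRotation i j θ * Q) i k = cos θ * Q i k - sin θ * Q j k := by
  simp only [givensRotation, add_mul, sub_mul, smul_mul_assoc, one_mul, Matrix.add_apply,
    Matrix.sub_apply, Matrix.smul_apply, smul_eq_mul, single_mul_apply_same,
    single_mul_apply_of_ne (h := hij)]
  ring

lemma givensRotation_mul_apply_right {i j : m} (hij : i ≠ j) (θ : ℝ)
    (Q : Matrix m m ℝ) (k : m) :
    (givensRotation i j θ * Q) j k = sin θ * Q i k + cos θ * Q j k := by
  simp only [givensRotation, add_mul, sub_mul, smul_mul_assoc, one_mul, Matrix.add_apply,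
    Matrix.sub_apply, Matrix.smul_apply, smul_eq_mul, single_mul_apply_same,
    single_mul_apply_of_ne (h := hij.symm)]
  ring

lemma givensRotation_mul_apply_of_ne {i j l : m} (hli : l ≠ i) (hlj : l ≠ j) (θ : ℝ)
    (Q : Matrix m m ℝ) (k : m) : (givensRotation i j θ * Q) l k = Q l k := by
  simp only [givensRotation, add_mul, sub_mul, smul_mul_assoc, one_mul, Matrix.add_apply,
    Matrix.sub_apply, Matrix.smul_apply, smul_eq_mul, single_mul_apply_of_ne (h := hli),
    single_mul_apply_of_ne (h := hlj)]
  ring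

lemma closure_givensRotations_le_specialOrthogonalGroup :
    Submonoid.closure (givensRotations m) ≤ specialOrthogonalGroup m ℝ :=
  Submonoid.closure_le.2 fun _ ⟨_, _, θ, hij, hg⟩ =>
    hg ▸ givensRotation_mem_specialOrthogonalGroup hij θ

end Givens

section Elimination

variable {n : ℕ}

def LeadingColumnsOne (k : ℕ) (Q : Matrix (Fin n) (Fin n) ℝ) : Prop :=
  ∀ r c : Fin n, (c : ℕ) < k → Q r c = (1 : Matrix (Fin n) (Fin n) ℝ) r c

lemma LeadingColumnsOne.mul {k : ℕ} {A B : Matrix (Fin n) (Fin n) ℝ}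
    (hA : LeadingColumnsOne k A) (hB : LeadingColumnsOne k B) : LeadingColumnsOne k (A * B) := by
  intro r c hc
  simp only [mul_apply, hB _ c hc, one_apply, mul_ite, mul_one, mul_zero,
    Finset.sum_ite_eq', Finset.mem_univ, if_true]
  exact hA r c hc

lemma leadingColumnsOne_givensRotation {k : ℕ} {i j : Fin n} (hi : k ≤ i) (hj : k ≤ j)
    (θ : ℝ) : LeadingColumnsOne k (givensRotation i j θ) := by
  intro r c hc
  have hci : c ≠ i := fun h => by omega
  have hcj : c ≠ j := fun h => by omega
  simp [givensRotation, hci.symm, hcj.symm]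

lemma exists_mem_closure_givensRotations_col_eq_zero (p : Fin n) (J : Finset (Fin n))
    (hJ : ∀ j ∈ J, p < j) (Q : Matrix (Fin n) (Fin n) ℝ) :
    ∃ W ∈ Submonoid.closure (givensRotations (Fin n)), LeadingColumnsOne p W ∧
      (∀ j ∈ J, (W * Q) j p = 0) ∧ (J.Nonempty → 0 ≤ (W * Q) p p) := by
  induction J using Finset.induction_on with
  | empty => exact ⟨1, one_mem _, fun r c _ => rfl, by simp, by simp⟩
  | insert j J hjJ ih =>
    obtain ⟨W, hW, hWp, hzero, -⟩ := ih fun j' hj' => hJ j' (Finset.mem_insert_of_mem hj')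
    have hpj : p < j := hJ j (Finset.mem_insert_self j J)
    obtain ⟨θ, hpiv, hj⟩ := exists_angle_rotating_to_nonneg_axis ((W * Q) p p) ((W * Q) j p)
    refine ⟨givensRotation p j θ * W,
      mul_mem (Submonoid.subset_closure ⟨p, j, θ, hpj.ne, rfl⟩) hW,
      (leadingColumnsOne_givensRotation le_rfl hpj.le θ).mul hWp, ?_, fun _ => ?_⟩
    · intro j' hj'
      rw [Matrix.mul_assoc]
      rcases Finset.mem_insert.1 hj' with rfl | hj'J
      · rwa [givensRotation_mul_apply_right hpj.ne]
      · have hj'p : j' ≠ p := (hJ j' (Finset.mem_insert_of_mem hj'J)).ne'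
        have hj'j : j' ≠ j := fun h => hjJ (h ▸ hj'J)
        rw [givensRotation_mul_apply_of_ne hj'p hj'j, hzero j' hj'J]
    · rwa [Matrix.mul_assoc, givensRotation_mul_apply_left hpj.ne]

lemma LeadingColumnsOne.succ {p : Fin n} {Q : Matrix (Fin n) (Fin n) ℝ}
    (hQ : Q ∈ orthogonalGroup (Fin n) ℝ) (hQp : LeadingColumnsOne p Q)
    (hbelow : ∀ r, p < r → Q r p = 0) (hpiv : 0 ≤ Q p p) : LeadingColumnsOne (p + 1) Q := by
  have hQQ := (mem_orthogonalGroup_iff' ..).1 hQ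
  -- the columns before `p` are standard basis vectors, so orthogonality to them kills the
  -- entries of column `p` above the diagonal
  have habove : ∀ r, r < p → Q r p = 0 := by
    intro r hr
    have h := congrFun (congrFun hQQ r) p
    simpa [mul_apply, hQp _ r hr, one_apply, hr.ne] using h
  have hcol : ∀ r, r ≠ p → Q r p = 0 := fun r hr =>
    (lt_or_gt_of_ne hr).elim (habove r) (hbelow r)
  have hpp : Q p p * Q p p = 1 := by
    have h := congrFun (congrFun hQQ p) p
    rwa [mul_apply, Finset.sum_eq_single p (fun r _ hr => by simp [hcol r hr]) (by simp),
      one_apply_eq] at h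
  have hone : Q p p = 1 := by nlinarith
  intro r c hc
  rcases (Nat.lt_succ_iff.1 hc).lt_or_eq with hc | hc
  · exact hQp r c hc
  · obtain rfl : c = p := Fin.ext hc
    rcases eq_or_ne r c with rfl | hr
    · rw [hone, one_apply_eq]
    · rw [hcol r hr, one_apply_ne hr]

lemma exists_mem_closure_givensRotations_leadingColumnsOne {Q : Matrix (Fin n) (Fin n) ℝ}
    (hQ : Q ∈ specialOrthogonalGroup (Fin n) ℝ) {k : ℕ} (hk : k < n) :
    ∃ W ∈ Submonoid.closure (givensRotations (Fin n)), LeadingColumnsOne k (W * Q) := by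
  induction k with
  | zero => exact ⟨1, one_mem _, fun r c hc => absurd hc (Nat.not_lt_zero _)⟩
  | succ k ih =>
    obtain ⟨W, hW, hWQ⟩ := ih (by omega)
    set p : Fin n := ⟨k, by omega⟩
    obtain ⟨V, hV, hVp, hzero, hpiv⟩ := exists_mem_closure_givensRotations_col_eq_zero p
      (Finset.univ.filter (p < ·)) (by simp) (W * Q)
    have hne : (Finset.univ.filter (p < ·)).Nonempty :=
      ⟨⟨k + 1, hk⟩, by simp [p, Fin.lt_def]⟩
    have hR : W * Q ∈ specialOrthogonalGroup (Fin n) ℝ :=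
      mul_mem (closure_givensRotations_le_specialOrthogonalGroup hW) hQ
    refine ⟨V * W, mul_mem hV hW, ?_⟩
    rw [Matrix.mul_assoc]
    exact LeadingColumnsOne.succ
      (mul_mem (closure_givensRotations_le_specialOrthogonalGroup hV) hR).1 (hVp.mul hWQ)
      (fun r hr => hzero r (by simpa using hr)) (hpiv hne)

lemma LeadingColumnsOne.eq_one {Q : Matrix (Fin (n + 1)) (Fin (n + 1)) ℝ}
    (hQ : Q ∈ specialOrthogonalGroup (Fin (n + 1)) ℝ) (hQn : LeadingColumnsOne n Q) :
    Q = 1 := by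
  have htri : Q.BlockTriangular id := fun r c hrc =>
    (hQn r c (by have := r.isLt; simp only [id] at hrc; omega)).trans (one_apply_ne hrc.ne')
  have hdiag : ∀ r, r ≠ Fin.last n → Q r r = 1 := fun r hr => by
    rw [hQn r r (Fin.val_lt_last hr), one_apply_eq]
  have hlast : Q (Fin.last n) (Fin.last n) = 1 := by
    have hdet : Q.det = 1 := hQ.2
    rwa [det_of_isUpperTriangular htri, Finset.prod_eq_single (Fin.last n)
      (fun r _ hr => hdiag r hr) (by simp)] at hdet
  have hsucc := LeadingColumnsOne.succ hQ.1 (p := Fin.last n) hQn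
    (fun r hr => absurd hr (Fin.le_last r).not_gt) (hlast ▸ zero_le_one)
  ext r c
  exact hsucc r c (by simpa using c.isLt)

lemma exists_mem_closure_givensRotations_mul_eq_one {Q : Matrix (Fin n) (Fin n) ℝ}
    (hQ : Q ∈ specialOrthogonalGroup (Fin n) ℝ) :
    ∃ W ∈ Submonoid.closure (givensRotations (Fin n)), W * Q = 1 := by
  cases n with
  | zero => exact ⟨1, one_mem _, Subsingleton.elim _ _⟩
  | succ n =>
    obtain ⟨W, hW, hWQ⟩ :=
      exists_mem_closure_givensRotations_leadingColumnsOne hQ n.lt_succ_self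
    exact ⟨W, hW,
      hWQ.eq_one (mul_mem (closure_givensRotations_le_specialOrthogonalGroup hW) hQ)⟩

end Elimination

section NegOneLocus

variable {m : Type*} [Fintype m] [DecidableEq m]

def negOneLocus (W : Set (Matrix m m ℝ)) : Set (Matrix m m ℝ) :=
  {P | ∀ w ∈ W, (1 + w * P).det = 0}

lemma isClosed_negOneLocus (W : Set (Matrix m m ℝ)) : IsClosed (negOneLocus W) := by
  simp only [negOneLocus, Set.ofPred_forall]
  exact isClosed_biInter fun w _ => isClosed_eq
    (continuous_const.add (continuous_const.matrix_mul continuous_id)).matrix_det continuous_const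

lemma analyticOnNhd_det_one_add_mul_givensRotation_mul (i j : m) (w P : Matrix m m ℝ) :
    AnalyticOnNhd ℝ (fun θ => (1 + w * (givensRotation i j θ * P)).det) Set.univ := by
  have hexp : ∀ θ, 1 + w * (givensRotation i j θ * P) = 1 + w * P
      + (cos θ - 1) • (w * ((single i i 1 + single j j 1) * P))
      + sin θ • (w * ((single j i 1 - single i j 1) * P)) := fun θ => by
    simp only [givensRotation, add_mul, one_mul, smul_mul_assoc, mul_add, mul_smul_comm,
      add_assoc]
  intro θ _
  refine analyticAt_matrix_det fun a b => ?_
  simp only [hexp]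
  simp only [Matrix.add_apply, Matrix.smul_apply, smul_eq_mul]
  fun_prop

lemma givensRotation_mul_mem_negOneLocus_of_frequently {W : Set (Matrix m m ℝ)}
    {P : Matrix m m ℝ} {i j : m} {u : ℕ → ℝ} (hu : Tendsto u atTop (𝓝[≠] 0))
    (hP : ∃ᶠ k in atTop, givensRotation i j (u k) * P ∈ negOneLocus W) (θ : ℝ) :
    givensRotation i j θ * P ∈ negOneLocus W := fun w hw =>
  (analyticOnNhd_det_one_add_mul_givensRotation_mul i j w P)
    |>.eqOn_zero_of_preconnected_of_frequently_eq_zero isPreconnected_univ (Set.mem_univ 0)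
    (hu.frequently (hP.mono fun _ hk => hk w hw))
    (Set.mem_univ θ)

variable [MeasurableSpace (Matrix m m ℝ)] [OpensMeasurableSpace (Matrix m m ℝ)]
  {μ : Measure (Matrix m m ℝ)} [IsFiniteMeasure μ]

lemma measure_negOneLocus_sdiff_givensRotation_orbit_eq_zero
    (hμ : ∀ g ∈ givensRotations m, MeasurePreserving (g * ·) μ μ) (W : Set (Matrix m m ℝ))
    {i j : m} (hij : i ≠ j) :
    μ (negOneLocus W \ {P | ∀ θ, givensRotation i j θ * P ∈ negOneLocus W}) = 0 := by
  set u : ℕ → ℝ := fun k => 1 / (k + 1)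
  have hu : Tendsto u atTop (𝓝[≠] 0) :=
    tendsto_nhdsWithin_of_tendsto_nhds_of_eventually_within _
      tendsto_one_div_add_atTop_nhds_zero_nat (Eventually.of_forall fun k => by
        simp only [u, Set.mem_compl_iff, Set.mem_singleton_iff]; positivity)
  have hreturn := measure_sdiff_setOf_frequently_mem_eq_zero
    (f := fun k P => givensRotation i j (u k) * P) (fun k => hμ _ ⟨i, j, u k, hij, rfl⟩)
    (isClosed_negOneLocus W).measurableSet
    (fun P hP => by simpa using givensRotation_mul_mem_negOneLocus_of_frequently hu hP 0)
  exact measure_mono_null (Set.sdiff_subset_sdiff_right fun P hP θ =>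
    givensRotation_mul_mem_negOneLocus_of_frequently hu hP θ) hreturn

lemma measure_negOneLocus_sdiff_negOneLocus_mul_eq_zero
    (hμ : ∀ g ∈ givensRotations m, MeasurePreserving (g * ·) μ μ)
    (W : Set (Matrix m m ℝ)) :
    μ (negOneLocus W \ negOneLocus (W * givensRotations m)) = 0 := by
  refine measure_mono_null (t := ⋃ (i : m) (j : m) (_ : i ≠ j),
    negOneLocus W \ {P | ∀ θ, givensRotation i j θ * P ∈ negOneLocus W}) ?_
    (measure_iUnion_null fun i => measure_iUnion_null fun j => measure_iUnion_null fun hij =>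
      measure_negOneLocus_sdiff_givensRotation_orbit_eq_zero hμ W hij)
  rintro P ⟨hP, hPW⟩
  simp only [negOneLocus, Set.mem_ofPred_eq, not_forall] at hPW
  obtain ⟨_, ⟨w, hw, _, ⟨i, j, θ, hij, rfl⟩, rfl⟩, hdet⟩ := hPW
  simp only [Set.mem_iUnion]
  exact ⟨i, j, hij, hP, fun h => hdet (by simpa only [Matrix.mul_assoc] using h θ w hw)⟩

lemma measure_sdiff_negOneLocus_pow_eq_zero
    (hμ : ∀ g ∈ givensRotations m, MeasurePreserving (g * ·) μ μ) (k : ℕ) :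
    μ ({P | (1 + P).det = 0} \ negOneLocus (givensRotations m ^ k)) = 0 := by
  induction k with
  | zero => simp [negOneLocus]
  | succ k ih =>
    rw [pow_succ]
    exact measure_mono_null (sdiff_triangle _ _ _)
      (measure_union_null ih (measure_negOneLocus_sdiff_negOneLocus_mul_eq_zero hμ _))

end NegOneLocus

theorem haar_null_det_one_add_eq_zero_general (n : ℕ)
    (μ : Measure (Matrix (Fin n) (Fin n) ℝ)) [IsProbabilityMeasure μ]
    (hsupp : μ {P | ¬(Pᵀ * P = 1 ∧ P.det = 1)} = 0)
    (hinv : ∀ g : Matrix (Fin n) (Fin n) ℝ, gᵀ * g = 1 → g.det = 1 →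
      Measure.map (fun P => g * P) μ = μ) :
    μ {P | (1 + P).det = 0} = 0 := by
  have hμ : ∀ g ∈ givensRotations (Fin n), MeasurePreserving (g * ·) μ μ := by
    rintro _ ⟨i, j, θ, hij, rfl⟩
    obtain ⟨horth, hdet⟩ := givensRotation_mem_specialOrthogonalGroup hij θ
    exact ⟨(continuous_const_mul _).measurable,
      hinv _ ((mem_orthogonalGroup_iff' (Fin n) ℝ).1 horth) hdet⟩
  have hcover : {P : Matrix (Fin n) (Fin n) ℝ | (1 + P).det = 0} ⊆
      {P | ¬(Pᵀ * P = 1 ∧ P.det = 1)} ∪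
        ⋃ k, {P | (1 + P).det = 0} \ negOneLocus (givensRotations (Fin n) ^ k) := by
    intro P hP
    by_cases hSO : Pᵀ * P = 1 ∧ P.det = 1
    · obtain ⟨W, hW, hWP⟩ := exists_mem_closure_givensRotations_mul_eq_one
        ⟨(mem_orthogonalGroup_iff' (Fin n) ℝ).2 hSO.1, hSO.2⟩
      obtain ⟨k, hk⟩ := Submonoid.exists_mem_pow_of_mem_closure hW
      refine Or.inr (Set.mem_iUnion.2 ⟨k, hP, fun h => ?_⟩)
      have h2 := h W hk
      rw [hWP, ← two_smul ℝ (1 : Matrix (Fin n) (Fin n) ℝ), det_smul, det_one] at h2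
      simp at h2
    · exact Or.inl hSO
  exact measure_mono_null hcover
    (measure_union_null hsupp (measure_iUnion_null (measure_sdiff_negOneLocus_pow_eq_zero hμ)))

/-- For every `n ≥ 1`, the set `{P ∈ SO(n) : det (I + P) = 0}` is a null set with respect
to the Haar probability measure on the compact topological group `SO(n)`. Here the Haar
probability measure is encoded as a Borel probability measure `μ` on the space of real
`n × n` matrices that is supported on `SO(n)` and invariant under left translation by
every element of `SO(n)`. -/
theorem haar_null_det_one_add_eq_zero (n : ℕ) (hn : 1 ≤ n)
    (μ : Measure (Matrix (Fin n) (Fin n) ℝ)) [IsProbabilityMeasure μ]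
    (hsupp : μ {P | ¬(Pᵀ * P = 1 ∧ P.det = 1)} = 0)
    (hinv : ∀ g : Matrix (Fin n) (Fin n) ℝ, gᵀ * g = 1 → g.det = 1 →
      Measure.map (fun P => g * P) μ = μ) :
    μ {P | (1 + P).det = 0} = 0 :=
  haar_null_det_one_add_eq_zero_general n μ hsupp hinv
end

section
/- For every Q ∈ SO(n) and every real κ with 0 ≤ κ < 1, det(Q − κI) > 0; in particular the matrix Q − κI is invertible. -/
open Matrix

lemma aux_det_ne (n : ℕ) (Q : Matrix (Fin n) (Fin n) ℝ)
    (hQ : Qᵀ * Q = 1) (c : ℝ) (hc0 : 0 ≤ c) (hc1 : c < 1) :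
    (Q - c • (1 : Matrix (Fin n) (Fin n) ℝ)).det ≠ 0 := by
  intro h
  rw [← Matrix.exists_mulVec_eq_zero_iff] at h
  obtain ⟨v, hv, hMv⟩ := h
  have hv' : Q *ᵥ v = c • v := by
    have := hMv
    rw [sub_mulVec, smul_mulVec, one_mulVec, sub_eq_zero] at this
    exact this
  have key : v ⬝ᵥ v = c ^ 2 * (v ⬝ᵥ v) := by
    calc v ⬝ᵥ v = v ⬝ᵥ ((Qᵀ * Q) *ᵥ v) := by rw [hQ, one_mulVec]
      _ = (Q *ᵥ v) ⬝ᵥ (Q *ᵥ v) := by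
          rw [← mulVec_mulVec, dotProduct_mulVec, vecMul_transpose]
      _ = (c • v) ⬝ᵥ (c • v) := by rw [hv']
      _ = c ^ 2 * (v ⬝ᵥ v) := by
          rw [smul_dotProduct, dotProduct_smul, smul_eq_mul, smul_eq_mul]; ring
  have hnn : 0 ≤ v ⬝ᵥ v := Finset.sum_nonneg fun i _ => mul_self_nonneg (v i)
  have hpos : 0 < v ⬝ᵥ v := by
    rcases lt_or_eq_of_le hnn with h | h
    · exact h
    · exact absurd ((dotProduct_self_eq_zero).mp h.symm) hv
  have hc2 : c ^ 2 < 1 := by nlinarith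
  nlinarith [key, hpos, hc2]

/-- For every `Q ∈ SO(n)` and every real `κ` with `0 ≤ κ < 1`, `det (Q - κ I) > 0`;
in particular the matrix `Q - κ I` is invertible. -/
theorem det_sub_smul_one_pos (n : ℕ) (Q : Matrix (Fin n) (Fin n) ℝ)
    (hQ : Qᵀ * Q = 1) (hdet : Q.det = 1) (κ : ℝ) (hκ0 : 0 ≤ κ) (hκ1 : κ < 1) :
    0 < (Q - κ • (1 : Matrix (Fin n) (Fin n) ℝ)).det ∧
      IsUnit (Q - κ • (1 : Matrix (Fin n) (Fin n) ℝ)) := by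
  set f : ℝ → ℝ := fun t => (Q - (t * κ) • (1 : Matrix (Fin n) (Fin n) ℝ)).det with hfdef
  have hf : Continuous f := by
    apply Continuous.matrix_det
    continuity
  have hf0 : f 0 = 1 := by simp [hfdef, hdet]
  have hne : ∀ t ∈ Set.Icc (0:ℝ) 1, f t ≠ 0 := by
    intro t ht
    exact aux_det_ne n Q hQ (t * κ) (mul_nonneg ht.1 hκ0)
      (lt_of_le_of_lt (by nlinarith [ht.1, ht.2] : t * κ ≤ κ) hκ1)
  have hpos : 0 < f 1 := by
    by_contra hle
    push_neg at hle
    have h1 : f 1 < 0 := lt_of_le_of_ne hle (hne 1 (by norm_num))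
    have := intermediate_value_Icc' (by norm_num : (0:ℝ) ≤ 1) hf.continuousOn
    have h0mem : (0:ℝ) ∈ Set.Icc (f 1) (f 0) := ⟨le_of_lt h1, by rw [hf0]; norm_num⟩
    obtain ⟨t, ht, hft⟩ := this h0mem
    exact hne t ht hft
  have heq : f 1 = (Q - κ • (1 : Matrix (Fin n) (Fin n) ℝ)).det := by simp [hfdef]
  rw [heq] at hpos
  refine ⟨hpos, ?_⟩
  rw [Matrix.isUnit_iff_isUnit_det]
  exact isUnit_iff_ne_zero.mpr (ne_of_gt hpos)
end

section
/- Let P ∈ SO(n) with I + P invertible, let 0 ≤ κ < 1, set γ = (1+κ)/(1−κ), and let A = (P − I)(I + P)⁻¹. Then det(I + γA) ≠ 0 and γ^{n(n−1)/2} · det(I + A)^{n−1} / det(I + γA)^{n−1} = (1 − κ²)^{n(n−1)/2} · det(P − κI)^{−(n−1)}. -/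
open Matrix

/-- Let `P ∈ SO(n)` with `I + P` invertible, let `0 ≤ κ < 1`, set `γ = (1+κ)/(1-κ)`,
and let `A = (P - I) * (I + P)⁻¹`. Then `det (I + γ • A) ≠ 0` and
`γ ^ (n(n-1)/2) * det (I + A) ^ (n-1) / det (I + γ • A) ^ (n-1)
  = (1 - κ²) ^ (n(n-1)/2) * det (P - κ I) ^ (-(n-1))`. -/
theorem cayley_density_formula (n : ℕ) (P : Matrix (Fin n) (Fin n) ℝ)
    (hP : Pᵀ * P = 1) (hdet : P.det = 1) (hinv : IsUnit (1 + P))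
    (κ : ℝ) (hκ0 : 0 ≤ κ) (hκ1 : κ < 1) (γ : ℝ) (hγ : γ = (1 + κ) / (1 - κ))
    (A : Matrix (Fin n) (Fin n) ℝ) (hA : A = (P - 1) * (1 + P)⁻¹) :
    (1 + γ • A).det ≠ 0 ∧
      γ ^ (n * (n - 1) / 2) * (1 + A).det ^ (n - 1) / (1 + γ • A).det ^ (n - 1) =
        (1 - κ ^ 2) ^ (n * (n - 1) / 2) /
          (P - κ • (1 : Matrix (Fin n) (Fin n) ℝ)).det ^ (n - 1) := by
  have hκ1' : (1 : ℝ) - κ ≠ 0 := by linarith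
  -- determinant of 1 + P is nonzero
  have hdu : IsUnit (1 + P).det := (Matrix.isUnit_iff_isUnit_det _).mp hinv
  have hd : (1 + P).det ≠ 0 := hdu.ne_zero
  have hinvmul : (1 + P)⁻¹ * (1 + P) = 1 := Matrix.nonsing_inv_mul _ hdu
  -- det (P - κ • 1) ≠ 0 via eigenvector argument
  have he : (P - κ • (1 : Matrix (Fin n) (Fin n) ℝ)).det ≠ 0 := by
    intro h0
    obtain ⟨v, hv0, hv⟩ := (Matrix.exists_mulVec_eq_zero_iff).mpr h0
    have hPv : P *ᵥ v = κ • v := by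
      have := hv
      rw [sub_mulVec, smul_mulVec, one_mulVec, sub_eq_zero] at this
      exact this
    have key : (P *ᵥ v) ⬝ᵥ (P *ᵥ v) = v ⬝ᵥ v := by
      rw [dotProduct_mulVec, ← mulVec_transpose, mulVec_mulVec, hP, one_mulVec]
    rw [hPv, dotProduct_smul, smul_dotProduct, smul_smul, smul_eq_mul] at key
    have hvv : v ⬝ᵥ v ≠ 0 := fun h => hv0 (dotProduct_self_eq_zero.mp h)
    have hκsq : κ * κ = 1 := by
      have := mul_right_cancel₀ hvv (by rw [key, one_mul] : κ * κ * (v ⬝ᵥ v) = 1 * (v ⬝ᵥ v))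
      exact this
    nlinarith
  -- key matrix identities
  have h1 : (1 + A) * (1 + P) = (2 : ℝ) • P := by
    rw [hA, add_mul, one_mul, mul_assoc, hinvmul, mul_one]
    rw [two_smul]
    abel
  have h2 : (1 + γ • A) * (1 + P) = (1 + P) + γ • (P - 1) := by
    rw [add_mul, one_mul, smul_mul_assoc, hA, mul_assoc, hinvmul, mul_one]
  have h3 : ((1 : ℝ) - κ) • ((1 + γ • A) * (1 + P)) = (2 : ℝ) • (P - κ • 1) := by
    have hc : (1 - κ) * ((1 + κ) / (1 - κ)) = 1 + κ := by field_simp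
    rw [h2, hγ, smul_add, smul_smul, hc]
    ext i j
    simp only [Matrix.add_apply, Matrix.smul_apply, Matrix.sub_apply, Matrix.one_apply,
      smul_eq_mul]
    by_cases hij : i = j <;> simp [hij] <;> ring
  -- determinant identities
  have dx : (1 + A).det * (1 + P).det = 2 ^ n := by
    rw [← Matrix.det_mul, h1, Matrix.det_smul, hdet, mul_one]
    norm_num
  have dy : (1 - κ) ^ n * ((1 + γ • A).det * (1 + P).det) =
      2 ^ n * (P - κ • (1 : Matrix (Fin n) (Fin n) ℝ)).det := by
    have := congrArg Matrix.det h3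
    rwa [Matrix.det_smul, Matrix.det_smul, Matrix.det_mul, Fintype.card_fin] at this
  have hy : (1 + γ • A).det ≠ 0 := by
    intro h
    rw [h, zero_mul, mul_zero] at dy
    exact (mul_ne_zero (pow_ne_zero n (two_ne_zero)) he) dy.symm
  refine ⟨hy, ?_⟩
  set m := n * (n - 1) / 2 with hm
  set k := n - 1 with hk
  have h2m : n * k = 2 * m := by
    rw [hm]
    refine (Nat.mul_div_cancel' ?_).symm
    rcases Nat.even_or_odd n with h | h
    · exact (h.mul_right _).two_dvd
    · exact ((Nat.Odd.sub_odd h odd_one).mul_left n).two_dvd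
  set x := (1 + A).det
  set y := (1 + γ • A).det
  set d := (1 + P).det
  set e := (P - κ • (1 : Matrix (Fin n) (Fin n) ℝ)).det
  have dx' : x ^ k * d ^ k = 2 ^ (n * k) := by
    rw [← mul_pow, dx, ← pow_mul]
  have dy' : (1 - κ) ^ (n * k) * (y ^ k * d ^ k) = 2 ^ (n * k) * e ^ k := by
    have := congrArg (· ^ k) dy
    simp only [mul_pow, ← pow_mul] at this
    linarith [this]
  have hpow : γ ^ m * (1 - κ) ^ (n * k) = (1 - κ ^ 2) ^ m := by
    rw [h2m, pow_mul, ← mul_pow]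
    congr 1
    rw [hγ]
    field_simp
    ring
  rw [div_eq_div_iff (pow_ne_zero _ hy) (pow_ne_zero _ he)]
  have hne : ((1 - κ) ^ (n * k) * d ^ k) ≠ 0 :=
    mul_ne_zero (pow_ne_zero _ hκ1') (pow_ne_zero _ hd)
  apply mul_right_cancel₀ hne
  calc γ ^ m * x ^ k * e ^ k * ((1 - κ) ^ (n * k) * d ^ k)
      = (γ ^ m * (1 - κ) ^ (n * k)) * (x ^ k * d ^ k) * e ^ k := by ring
    _ = (1 - κ ^ 2) ^ m * (2 ^ (n * k) * e ^ k) := by rw [hpow, dx']; ring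
    _ = (1 - κ ^ 2) ^ m * ((1 - κ) ^ (n * k) * (y ^ k * d ^ k)) := by rw [dy']
    _ = (1 - κ ^ 2) ^ m * y ^ k * ((1 - κ) ^ (n * k) * d ^ k) := by ring
end

section
/- For every real γ ≥ 1, ∫_{ℝ} ( γ / (π (1 + γ² x²)) ) · log( γ (1 + x²) / (1 + γ² x²) ) dx = log( (γ + 1)² / (4γ) ). Equivalently, the Kullback–Leibler divergence of the Cauchy distribution with location 0 and scale 1/γ from the standard Cauchy distribution equals log((γ+1)²/(4γ)). -/
/-!
After the substitution `u = γ x` the integral becomes `L(γ) / π - log γ`, where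
`L(a) = ∫ log ((a² + x²) / (1 + x²)) / (1 + x²) dx`. The integrand of `L` is bounded by
`|log a²| / (1 + x²)`, so `L` may be differentiated under the integral sign; a partial fraction
decomposition gives `L'(a) = 2π / (a + 1)`, and since `L(1) = 0` we get
`L(a) = 2π log ((a + 1) / 2)`.
-/

open Real MeasureTheory Set Filter

section
variable {a : ℝ}

lemma integrable_inv_sq_add_sq (ha : a ≠ 0) : Integrable fun x : ℝ => (a ^ 2 + x ^ 2)⁻¹ := by
  have h := (integrable_inv_one_add_sq.comp_mul_left' (inv_ne_zero ha)).const_mul (a ^ 2)⁻¹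
  refine h.congr (Eventually.of_forall fun x => ?_)
  field_simp

lemma integral_univ_inv_sq_add_sq (ha : a ≠ 0) : ∫ x : ℝ, (a ^ 2 + x ^ 2)⁻¹ = π / |a| := by
  have hscale (x : ℝ) : (a ^ 2 + x ^ 2)⁻¹ = (a ^ 2)⁻¹ * (1 + (a⁻¹ * x) ^ 2)⁻¹ := by
    field_simp
  simp_rw [hscale]
  rw [integral_const_mul, Measure.integral_comp_mul_left (fun y : ℝ => (1 + y ^ 2)⁻¹),
    integral_univ_inv_one_add_sq, inv_inv, smul_eq_mul, ← sq_abs a]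
  field_simp

lemma integral_two_mul_div_sq_add_sq_mul_one_add_sq (ha : 0 < a) (ha1 : a ≠ 1) :
    ∫ x : ℝ, 2 * a / ((a ^ 2 + x ^ 2) * (1 + x ^ 2)) = 2 * π / (a + 1) := by
  have hsq : a ^ 2 - 1 ≠ 0 := by
    rwa [sub_ne_zero, Ne, pow_eq_one_iff_of_nonneg ha.le two_ne_zero]
  have hpartial (x : ℝ) : 2 * a / ((a ^ 2 + x ^ 2) * (1 + x ^ 2)) =
      2 * a / (a ^ 2 - 1) * ((1 + x ^ 2)⁻¹ - (a ^ 2 + x ^ 2)⁻¹) := by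
    field_simp
    ring
  simp_rw [hpartial]
  rw [integral_const_mul, integral_sub integrable_inv_one_add_sq
    (integrable_inv_sq_add_sq ha.ne'), integral_univ_inv_one_add_sq,
    integral_univ_inv_sq_add_sq ha.ne', abs_of_pos ha]
  field_simp
  ring

lemma abs_log_sq_add_sq_div_one_add_sq_le (ha : a ≠ 0) (x : ℝ) :
    |log ((a ^ 2 + x ^ 2) / (1 + x ^ 2))| ≤ |log (a ^ 2)| := by
  have hx : 0 < 1 + x ^ 2 := by positivity
  have ha2 : 0 < a ^ 2 := by positivity
  rcases le_total (a ^ 2) 1 with h | h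
  · have hlow : a ^ 2 ≤ (a ^ 2 + x ^ 2) / (1 + x ^ 2) := by
      rw [le_div_iff₀ hx]; nlinarith [sq_nonneg x]
    have hup : (a ^ 2 + x ^ 2) / (1 + x ^ 2) ≤ 1 := by
      rw [div_le_one hx]; linarith
    rw [abs_of_nonpos (log_nonpos (by positivity) hup), abs_of_nonpos (log_nonpos ha2.le h)]
    exact neg_le_neg (log_le_log ha2 hlow)
  · have hlow : 1 ≤ (a ^ 2 + x ^ 2) / (1 + x ^ 2) := by
      rw [one_le_div hx]; linarith
    have hup : (a ^ 2 + x ^ 2) / (1 + x ^ 2) ≤ a ^ 2 := by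
      rw [div_le_iff₀ hx]; nlinarith [sq_nonneg x]
    rw [abs_of_nonneg (log_nonneg hlow), abs_of_nonneg (log_nonneg h)]
    exact log_le_log (by positivity) hup

lemma integrable_log_sq_add_sq_div (ha : a ≠ 0) :
    Integrable fun x : ℝ => log ((a ^ 2 + x ^ 2) / (1 + x ^ 2)) / (1 + x ^ 2) := by
  refine (integrable_inv_one_add_sq.const_mul |log (a ^ 2)|).mono'
    (by fun_prop : Measurable _).aestronglyMeasurable (Eventually.of_forall fun x => ?_)
  rw [norm_div, norm_of_nonneg (by positivity : (0 : ℝ) ≤ 1 + x ^ 2), div_eq_mul_inv,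
    Real.norm_eq_abs]
  exact mul_le_mul_of_nonneg_right (abs_log_sq_add_sq_div_one_add_sq_le ha x) (by positivity)

lemma hasDerivAt_log_sq_add_sq_div (x : ℝ) (ha : a ≠ 0) :
    HasDerivAt (fun b => log ((b ^ 2 + x ^ 2) / (1 + x ^ 2)) / (1 + x ^ 2))
      (2 * a / ((a ^ 2 + x ^ 2) * (1 + x ^ 2))) a := by
  have h := ((((hasDerivAt_pow 2 a).add_const (x ^ 2)).div_const (1 + x ^ 2)).log
    (by positivity)).div_const (1 + x ^ 2)
  refine h.congr_deriv ?_
  field_simp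
  ring

lemma norm_two_mul_div_sq_add_sq_mul_one_add_sq_le {b : ℝ} (ha : 0 < a) (hb : a / 2 < b)
    (x : ℝ) : ‖2 * b / ((b ^ 2 + x ^ 2) * (1 + x ^ 2))‖ ≤ 4 / a * (1 + x ^ 2)⁻¹ := by
  have hx : 0 < 1 + x ^ 2 := by positivity
  have hb0 : 0 < b := by linarith
  rw [Real.norm_of_nonneg (by positivity), ← div_eq_mul_inv, div_le_div_iff₀ (by positivity) hx,
    div_mul_eq_mul_div, le_div_iff₀ ha]
  have hab : 2 * b * a ≤ 4 * b ^ 2 := by nlinarith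
  nlinarith [sq_nonneg x, mul_pos hb0 hb0]

noncomputable def logRatioIntegral (a : ℝ) : ℝ :=
  ∫ x : ℝ, log ((a ^ 2 + x ^ 2) / (1 + x ^ 2)) / (1 + x ^ 2)

lemma hasDerivAt_logRatioIntegral (ha : 0 < a) :
    HasDerivAt logRatioIntegral (∫ x : ℝ, 2 * a / ((a ^ 2 + x ^ 2) * (1 + x ^ 2))) a := by
  refine (hasDerivAt_integral_of_dominated_loc_of_deriv_le (Ioi_mem_nhds (half_lt_self ha))
    (Eventually.of_forall fun b => (by fun_prop : Measurable _).aestronglyMeasurable)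
    (integrable_log_sq_add_sq_div ha.ne') (by fun_prop : Measurable _).aestronglyMeasurable
    (Eventually.of_forall fun x b hb => norm_two_mul_div_sq_add_sq_mul_one_add_sq_le ha hb x)
    (integrable_inv_one_add_sq.const_mul _)
    (Eventually.of_forall fun x b hb => hasDerivAt_log_sq_add_sq_div x ?_)).2
  exact (lt_trans (half_pos ha) hb).ne'

lemma logRatioIntegral_one : logRatioIntegral 1 = 0 := by
  simp [logRatioIntegral, div_self (by positivity : (1 : ℝ) + _ ^ 2 ≠ 0)]

lemma logRatioIntegral_eq (ha : 0 < a) : logRatioIntegral a = 2 * π * log ((a + 1) / 2) := by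
  set φ : ℝ → ℝ := fun b => logRatioIntegral b - 2 * π * log ((b + 1) / 2)
  have hpos : ∀ b ∈ uIcc 1 a, 0 < b := fun b hb =>
    lt_of_lt_of_le (lt_min one_pos ha) hb.1
  have hlog (b : ℝ) (hb : 0 < b) :
      HasDerivAt (fun b => 2 * π * log ((b + 1) / 2)) (2 * π / (b + 1)) b := by
    have h := ((((hasDerivAt_id b).add_const 1).div_const 2).log (by positivity)).const_mul (2 * π)
    refine h.congr_deriv ?_
    simp only [id]
    field_simp
  have hφ (b : ℝ) (hb : 0 < b) (hb1 : b ≠ 1) : HasDerivAt φ 0 b := by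
    have h := (hasDerivAt_logRatioIntegral hb).sub (hlog b hb)
    rwa [integral_two_mul_div_sq_add_sq_mul_one_add_sq hb hb1, sub_self] at h
  have hcont : ContinuousOn φ (uIcc 1 a) := fun b hb =>
    ((hasDerivAt_logRatioIntegral (hpos b hb)).sub
      (hlog b (hpos b hb))).continuousAt.continuousWithinAt
  -- the partial fraction decomposition fails at `b = 1`, a countable exception for the FTC
  have hconst := integral_eq_of_hasDerivAt_off_countable φ (fun _ => 0) (countable_singleton 1)
    hcont (fun b hb => hφ b (hpos b (Ioo_subset_Icc_self hb.1)) hb.2) intervalIntegrable_const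
  norm_num [φ, logRatioIntegral_one] at hconst
  linarith

end

/-- For every real `γ ≥ 1`,
`∫ x, (γ / (π (1 + γ² x²))) * log (γ (1 + x²) / (1 + γ² x²)) dx = log ((γ + 1)² / (4γ))`:
the Kullback–Leibler divergence of the Cauchy distribution with location `0` and scale
`1/γ` from the standard Cauchy distribution. -/
theorem kl_cauchy_one_dim (γ : ℝ) (hγ : 1 ≤ γ) :
    ∫ x : ℝ, (γ / (π * (1 + γ ^ 2 * x ^ 2))) *
        Real.log (γ * (1 + x ^ 2) / (1 + γ ^ 2 * x ^ 2)) =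
      Real.log ((γ + 1) ^ 2 / (4 * γ)) := by
  have hγ0 : 0 < γ := by linarith
  set g : ℝ → ℝ := fun u =>
    γ / π * (log ((γ ^ 2 + u ^ 2) / (1 + u ^ 2)) / (1 + u ^ 2) - log γ * (1 + u ^ 2)⁻¹)
  have hg (x : ℝ) : γ / (π * (1 + γ ^ 2 * x ^ 2)) *
      log (γ * (1 + x ^ 2) / (1 + γ ^ 2 * x ^ 2)) = g (γ * x) := by
    have hratio : γ * (1 + x ^ 2) / (1 + γ ^ 2 * x ^ 2) =
        (γ ^ 2 + (γ * x) ^ 2) / (1 + (γ * x) ^ 2) / γ := by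
      field_simp
    rw [hratio, log_div (by positivity) hγ0.ne']
    simp only [g, mul_pow]
    field_simp
  have hlog : log ((γ + 1) ^ 2 / (4 * γ)) = 2 * log ((γ + 1) / 2) - log γ := by
    rw [show (γ + 1) ^ 2 / (4 * γ) = ((γ + 1) / 2) ^ 2 / γ by ring,
      log_div (by positivity) hγ0.ne', log_pow, Nat.cast_ofNat]
  simp_rw [hg]
  rw [Measure.integral_comp_mul_left g γ, integral_const_mul,
    integral_sub (integrable_log_sq_add_sq_div hγ0.ne') (integrable_inv_one_add_sq.const_mul _),
    integral_const_mul, integral_univ_inv_one_add_sq, ← logRatioIntegral,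
    logRatioIntegral_eq hγ0, hlog, abs_of_pos (inv_pos.mpr hγ0), smul_eq_mul]
  field_simp
end

section
/- For every real γ ≥ 1, ∫_{ℝ³} ( γ³ / (π² (1 + γ² ‖x‖²)²) ) · log( γ³ (1 + ‖x‖²)² / (1 + γ² ‖x‖²)² ) dx = log( (γ + 1)⁴ / (16 γ) ) + 2(1 − γ)/(1 + γ). Equivalently, the Kullback–Leibler divergence of the 3-dimensional isotropic Cauchy distribution Cauchy₃(0, γ⁻²I₃) from Cauchy₃(0, I₃) equals log((γ+1)⁴/(16γ)) + 2(1−γ)/(1+γ). -/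
/-!
The integrand is radial, `f(‖x‖)`, so in polar coordinates the integral is `4π ∫₀^∞ r² f(r) dr`;
the substitution `u = γ r` turns the logarithm into `2 log ((u² + γ²) / (u² + 1)) - log γ` against
the weight `u² / (1 + u²)²`, whose integral is `π / 4`. The remaining integral `D(γ)` vanishes at
`γ = 1`; differentiating under the integral sign gives
`D'(b) = 2b ∫₀^∞ u² / ((1 + u²)² (b² + u²)) du = π b / (2 (1 + b)²)` by partial fractions, so
`D(γ) = (π / 2) (log (1 + γ) + 1 / (1 + γ) - log 2 - 1 / 2)`.
-/

open Real MeasureTheory Set Filter Topology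

theorem integral_fun_norm_euclideanSpace_fin_three (f : ℝ → ℝ) :
    ∫ x : EuclideanSpace ℝ (Fin 3), f ‖x‖ = 4 * π * ∫ r in Ioi (0 : ℝ), r ^ 2 * f r := by
  rw [integral_fun_norm_addHaar volume f, measureReal_def, EuclideanSpace.volume_ball_fin_three]
  simp only [finrank_euclideanSpace_fin, smul_eq_mul, nsmul_eq_mul]
  rw [ENNReal.toReal_mul, ENNReal.toReal_pow, ENNReal.toReal_ofReal zero_le_one,
    ENNReal.toReal_ofReal (by positivity)]
  push_cast
  ring_nf

theorem hasDerivAt_div_one_add_sq (u : ℝ) :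
    HasDerivAt (fun u : ℝ => u / (1 + u ^ 2)) ((1 - u ^ 2) / (1 + u ^ 2) ^ 2) u := by
  have hpos : 0 < 1 + u ^ 2 := by positivity
  refine ((hasDerivAt_id' u).div ((hasDerivAt_pow 2 u).const_add 1) hpos.ne').congr_deriv ?_
  simp only [Nat.cast_ofNat]
  ring

theorem tendsto_div_one_add_sq_atTop : Tendsto (fun u : ℝ => u / (1 + u ^ 2)) atTop (𝓝 0) := by
  have h := (tendsto_id.atTop_add (tendsto_inv_atTop_zero (𝕜 := ℝ))).inv_tendsto_atTop
  refine h.congr' ?_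
  filter_upwards [eventually_gt_atTop 0] with u hu
  simp only [Pi.inv_apply, id_eq]
  field_simp
  ring

theorem tendsto_arctan_atTop_nhds : Tendsto arctan atTop (𝓝 (π / 2)) :=
  tendsto_arctan_atTop.mono_right nhdsWithin_le_nhds

theorem hasDerivAt_arctan_sub_div_one_add_sq (u : ℝ) :
    HasDerivAt (fun u => (arctan u - u / (1 + u ^ 2)) / 2) (u ^ 2 / (1 + u ^ 2) ^ 2) u := by
  refine (((hasDerivAt_arctan u).sub (hasDerivAt_div_one_add_sq u)).div_const 2).congr_deriv ?_
  field_simp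
  ring

theorem hasDerivAt_arctan_add_div_one_add_sq (u : ℝ) :
    HasDerivAt (fun u => (arctan u + u / (1 + u ^ 2)) / 2) (1 / (1 + u ^ 2) ^ 2) u := by
  refine (((hasDerivAt_arctan u).add (hasDerivAt_div_one_add_sq u)).div_const 2).congr_deriv ?_
  field_simp
  ring

theorem hasDerivAt_arctan_div_div {a : ℝ} (ha : a ≠ 0) (u : ℝ) :
    HasDerivAt (fun u => arctan (u / a) / a) (1 / (a ^ 2 + u ^ 2)) u := by
  refine (((hasDerivAt_arctan (u / a)).comp u ((hasDerivAt_id' u).div_const a)).div_const a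
    ).congr_deriv ?_
  field_simp

theorem tendsto_arctan_sub_div_one_add_sq_atTop :
    Tendsto (fun u => (arctan u - u / (1 + u ^ 2)) / 2) atTop (𝓝 (π / 4)) := by
  convert (tendsto_arctan_atTop_nhds.sub tendsto_div_one_add_sq_atTop).div_const 2 using 2
  ring

theorem integrableOn_sq_div_one_add_sq_sq :
    IntegrableOn (fun u : ℝ => u ^ 2 / (1 + u ^ 2) ^ 2) (Ioi 0) :=
  integrableOn_Ioi_deriv_of_nonneg' (fun u _ => hasDerivAt_arctan_sub_div_one_add_sq u)
    (fun u _ => by positivity) tendsto_arctan_sub_div_one_add_sq_atTop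

theorem integral_sq_div_one_add_sq_sq : ∫ u in Ioi (0 : ℝ), u ^ 2 / (1 + u ^ 2) ^ 2 = π / 4 := by
  rw [integral_Ioi_of_hasDerivAt_of_nonneg' (fun u _ => hasDerivAt_arctan_sub_div_one_add_sq u)
    (fun u _ => by positivity) tendsto_arctan_sub_div_one_add_sq_atTop]
  simp

theorem integral_sq_div_one_add_sq_sq_mul_sq_add_sq {a : ℝ} (ha : 0 < a) (ha1 : a ≠ 1) :
    ∫ u in Ioi (0 : ℝ), u ^ 2 / ((1 + u ^ 2) ^ 2 * (a ^ 2 + u ^ 2)) = π / (4 * (1 + a) ^ 2) := by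
  have hd : a ^ 2 - 1 ≠ 0 := by
    rwa [sub_ne_zero, Ne, pow_eq_one_iff_of_nonneg ha.le two_ne_zero]
  -- `u² / ((1 + u²)² (a² + u²)) = c / (1 + u²) + d / (1 + u²)² - c / (a² + u²)`
  set c : ℝ := a ^ 2 / (a ^ 2 - 1) ^ 2
  set d : ℝ := -1 / (a ^ 2 - 1)
  have hderiv : ∀ u, HasDerivAt
      (fun u => c * arctan u + d * ((arctan u + u / (1 + u ^ 2)) / 2) - c * (arctan (u / a) / a))
      (u ^ 2 / ((1 + u ^ 2) ^ 2 * (a ^ 2 + u ^ 2))) u := by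
    intro u
    refine ((((hasDerivAt_arctan u).const_mul c).add
      ((hasDerivAt_arctan_add_div_one_add_sq u).const_mul d)).sub
      ((hasDerivAt_arctan_div_div ha.ne' u).const_mul c)).congr_deriv ?_
    simp only [c, d]
    field_simp
    ring
  have hlim := ((tendsto_arctan_atTop_nhds.const_mul c).add
    (((tendsto_arctan_atTop_nhds.add tendsto_div_one_add_sq_atTop).div_const 2).const_mul d)).sub
    (((tendsto_arctan_atTop_nhds.comp (tendsto_id.atTop_div_const ha)).div_const a).const_mul c)
  rw [integral_Ioi_of_hasDerivAt_of_nonneg' (fun u _ => hderiv u) (fun u _ => by positivity) hlim]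
  simp only [c, d, arctan_zero, zero_div, add_zero, mul_zero, sub_zero]
  field_simp
  ring

noncomputable def logRatioMoment (b : ℝ) : ℝ :=
  ∫ u in Ioi (0 : ℝ), u ^ 2 / (1 + u ^ 2) ^ 2 * log ((u ^ 2 + b ^ 2) / (u ^ 2 + 1))

theorem continuous_log_ratio {b : ℝ} (hb : b ≠ 0) :
    Continuous (fun u : ℝ => log ((u ^ 2 + b ^ 2) / (u ^ 2 + 1))) := by
  fun_prop (disch := intros; positivity)

theorem integrableOn_logRatioMoment_integrand {b : ℝ} (hb : 1 ≤ b) :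
    IntegrableOn (fun u : ℝ => u ^ 2 / (1 + u ^ 2) ^ 2 * log ((u ^ 2 + b ^ 2) / (u ^ 2 + 1)))
      (Ioi 0) := by
  refine integrableOn_sq_div_one_add_sq_sq.mul_bdd (c := log (b ^ 2))
    (continuous_log_ratio (by positivity)).aestronglyMeasurable (ae_of_all _ fun u => ?_)
  have hb2 : 1 ≤ b ^ 2 := one_le_pow₀ hb
  have hlow : 1 ≤ (u ^ 2 + b ^ 2) / (u ^ 2 + 1) := by
    rw [le_div_iff₀ (by positivity)]
    linarith
  have hup : (u ^ 2 + b ^ 2) / (u ^ 2 + 1) ≤ b ^ 2 := by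
    rw [div_le_iff₀ (by positivity)]
    nlinarith [sq_nonneg u]
  rw [Real.norm_of_nonneg (log_nonneg hlow)]
  exact log_le_log (by linarith) hup

theorem hasDerivAt_logRatioMoment {b : ℝ} (hb : 1 ≤ b) :
    HasDerivAt logRatioMoment
      (∫ u in Ioi (0 : ℝ), u ^ 2 / (1 + u ^ 2) ^ 2 * (2 * b / (u ^ 2 + b ^ 2))) b := by
  have hderiv : ∀ u c : ℝ, 0 < c → HasDerivAt
      (fun c => u ^ 2 / (1 + u ^ 2) ^ 2 * log ((u ^ 2 + c ^ 2) / (u ^ 2 + 1)))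
      (u ^ 2 / (1 + u ^ 2) ^ 2 * (2 * c / (u ^ 2 + c ^ 2))) c := by
    intro u c hc
    have hpos : 0 < (u ^ 2 + c ^ 2) / (u ^ 2 + 1) := by positivity
    refine ((((hasDerivAt_pow 2 c).const_add (u ^ 2)).div_const (u ^ 2 + 1)).log
      hpos.ne').const_mul _ |>.congr_deriv ?_
    field_simp
    ring
  have hbound : ∀ u c : ℝ, 1 / 2 < c →
      ‖u ^ 2 / (1 + u ^ 2) ^ 2 * (2 * c / (u ^ 2 + c ^ 2))‖ ≤ 4 * (u ^ 2 / (1 + u ^ 2) ^ 2) := by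
    intro u c hc
    have hpos : 0 < u ^ 2 + c ^ 2 := by positivity
    rw [Real.norm_of_nonneg (by positivity), mul_comm 4]
    gcongr
    rw [div_le_iff₀ hpos]
    nlinarith [sq_nonneg u]
  exact (hasDerivAt_integral_of_dominated_loc_of_deriv_le
    (F := fun c u => u ^ 2 / (1 + u ^ 2) ^ 2 * log ((u ^ 2 + c ^ 2) / (u ^ 2 + 1)))
    (Ioi_mem_nhds (by linarith : 1 / 2 < b))
    (eventually_ne_nhds (by positivity) |>.mono fun c hc =>
      integrableOn_sq_div_one_add_sq_sq.1.mul (continuous_log_ratio hc).aestronglyMeasurable)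
    (integrableOn_logRatioMoment_integrand hb)
    (Continuous.aestronglyMeasurable (by fun_prop (disch := intros; positivity)))
    (ae_of_all _ fun u c hc => hbound u c hc) (integrableOn_sq_div_one_add_sq_sq.const_mul 4)
    (ae_of_all _ fun u c hc => hderiv u c (by linarith [mem_Ioi.mp hc]))).2

theorem hasDerivAt_logRatioMoment_of_one_lt {b : ℝ} (hb : 1 < b) :
    HasDerivAt logRatioMoment (π * b / (2 * (1 + b) ^ 2)) b := by
  convert hasDerivAt_logRatioMoment hb.le using 1
  have hb0 : 0 < b := by linarith
  calc π * b / (2 * (1 + b) ^ 2)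
      = 2 * b * ∫ u in Ioi (0 : ℝ), u ^ 2 / ((1 + u ^ 2) ^ 2 * (b ^ 2 + u ^ 2)) := by
        rw [integral_sq_div_one_add_sq_sq_mul_sq_add_sq hb0 hb.ne']
        field_simp
        ring
    _ = _ := by
        rw [← integral_const_mul]
        congr 1 with u
        field_simp
        ring

theorem logRatioMoment_one : logRatioMoment 1 = 0 := by
  simp [logRatioMoment]

theorem logRatioMoment_eq {b : ℝ} (hb : 1 ≤ b) :
    logRatioMoment b = π / 2 * (log (1 + b) + 1 / (1 + b) - log 2 - 1 / 2) := by
  set ψ : ℝ → ℝ := fun c => π / 2 * (log (1 + c) + (1 + c)⁻¹)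
  have hψ : ∀ c, 0 < c → HasDerivAt ψ (π * c / (2 * (1 + c) ^ 2)) c := by
    intro c hc
    have hpos : 0 < 1 + c := by linarith
    have h1 := (hasDerivAt_id' c).const_add 1
    refine ((h1.log hpos.ne').add (h1.inv hpos.ne')).const_mul (π / 2) |>.congr_deriv ?_
    field_simp
    ring
  have hderiv : ∀ c ∈ Ioo 1 b, HasDerivAt (fun c => logRatioMoment c - ψ c) 0 c := fun c hc =>
    ((hasDerivAt_logRatioMoment_of_one_lt hc.1).sub (hψ c (by linarith [hc.1]))).congr_deriv
      (sub_self _)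
  have hcont : ContinuousOn (fun c => logRatioMoment c - ψ c) (Icc 1 b) := fun c hc =>
    ((hasDerivAt_logRatioMoment hc.1).continuousAt.sub
      (hψ c (by linarith [hc.1])).continuousAt).continuousWithinAt
  have hconst := intervalIntegral.integral_eq_sub_of_hasDerivAt_of_le hb hcont hderiv
    intervalIntegrable_const
  rw [intervalIntegral.integral_zero, logRatioMoment_one, eq_comm, sub_eq_zero] at hconst
  rw [sub_eq_iff_eq_add.mp hconst]
  simp only [ψ, one_add_one_eq_two, one_div]
  ring

theorem log_cauchy_ratio_eq {γ : ℝ} (hγ : 0 < γ) (r : ℝ) :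
    log (γ ^ 3 * (1 + r ^ 2) ^ 2 / (1 + γ ^ 2 * r ^ 2) ^ 2) =
      2 * log (((γ * r) ^ 2 + γ ^ 2) / ((γ * r) ^ 2 + 1)) - log γ := by
  have harg : γ ^ 3 * (1 + r ^ 2) ^ 2 / (1 + γ ^ 2 * r ^ 2) ^ 2 =
      (((γ * r) ^ 2 + γ ^ 2) / ((γ * r) ^ 2 + 1)) ^ 2 / γ := by
    field_simp
    ring
  rw [harg, log_div (by positivity) hγ.ne', log_pow, Nat.cast_ofNat]

theorem integral_sq_mul_cauchy_log_ratio {γ : ℝ} (hγ : 1 ≤ γ) :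
    ∫ r in Ioi (0 : ℝ), r ^ 2 * (γ ^ 3 / (π ^ 2 * (1 + γ ^ 2 * r ^ 2) ^ 2) *
        log (γ ^ 3 * (1 + r ^ 2) ^ 2 / (1 + γ ^ 2 * r ^ 2) ^ 2)) =
      (2 * logRatioMoment γ - log γ * (π / 4)) / π ^ 2 := by
  have hγ0 : 0 < γ := by linarith
  set G : ℝ → ℝ := fun u => (2 * (u ^ 2 / (1 + u ^ 2) ^ 2 * log ((u ^ 2 + γ ^ 2) / (u ^ 2 + 1)))
    - log γ * (u ^ 2 / (1 + u ^ 2) ^ 2)) / π ^ 2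
  calc _ = ∫ r in Ioi (0 : ℝ), γ * G (γ * r) := by
        congr 1 with r
        rw [log_cauchy_ratio_eq hγ0]
        simp only [G]
        field_simp
    _ = ∫ u in Ioi (0 : ℝ), G u := by
        rw [integral_const_mul, integral_comp_mul_left_Ioi G 0 hγ0, mul_zero, smul_eq_mul,
          mul_inv_cancel_left₀ hγ0.ne']
    _ = _ := by
        simp only [G]
        rw [integral_div, integral_sub ((integrableOn_logRatioMoment_integrand hγ).const_mul 2)
          (integrableOn_sq_div_one_add_sq_sq.const_mul _), integral_const_mul, integral_const_mul,
          integral_sq_div_one_add_sq_sq, logRatioMoment]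

/-- For every real `γ ≥ 1`,
`∫_{ℝ³} (γ³ / (π² (1 + γ² ‖x‖²)²)) * log (γ³ (1 + ‖x‖²)² / (1 + γ² ‖x‖²)²) dx
  = log ((γ + 1)⁴ / (16 γ)) + 2 (1 - γ) / (1 + γ)`:
the Kullback–Leibler divergence of the isotropic Cauchy distribution `Cauchy₃(0, γ⁻² I₃)`
from `Cauchy₃(0, I₃)`. -/
theorem kl_cauchy_three_dim (γ : ℝ) (hγ : 1 ≤ γ) :
    ∫ x : EuclideanSpace ℝ (Fin 3),
        (γ ^ 3 / (π ^ 2 * (1 + γ ^ 2 * ‖x‖ ^ 2) ^ 2)) *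
          Real.log (γ ^ 3 * (1 + ‖x‖ ^ 2) ^ 2 / (1 + γ ^ 2 * ‖x‖ ^ 2) ^ 2) =
      Real.log ((γ + 1) ^ 4 / (16 * γ)) + 2 * (1 - γ) / (1 + γ) := by
  have hγ0 : 0 < γ := by linarith
  calc _ = 4 * π * ((2 * logRatioMoment γ - log γ * (π / 4)) / π ^ 2) := by
        rw [← integral_sq_mul_cauchy_log_ratio hγ]
        exact integral_fun_norm_euclideanSpace_fin_three fun r =>
          γ ^ 3 / (π ^ 2 * (1 + γ ^ 2 * r ^ 2) ^ 2) *
            log (γ ^ 3 * (1 + r ^ 2) ^ 2 / (1 + γ ^ 2 * r ^ 2) ^ 2)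
    _ = 4 * log (1 + γ) - 4 * log 2 - log γ + 2 * (1 - γ) / (1 + γ) := by
        rw [logRatioMoment_eq hγ]
        field_simp
        ring
    _ = _ := by
        rw [log_div (by positivity) (by positivity), log_mul (by norm_num) hγ0.ne', log_pow,
          show (16 : ℝ) = 2 ^ 4 by norm_num, log_pow, add_comm γ]
        push_cast
        ring
end

section
/- For every real κ with 0 ≤ κ < 1, (1/(2π)) ∫₀^{2π} w_κ(θ) · log w_κ(θ) dθ = −log(1 − κ²), where w_κ(θ) = (1 − κ²) / (1 + κ² − 2κ cos θ). Equivalently, the Kullback–Leibler divergence of the wrapped Cauchy distribution with concentration κ from the uniform distribution on the circle equals −log(1 − κ²). -/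
/-!
On the unit circle the wrapped Cauchy density is the Poisson kernel `P_a` of the unit disk at
`a = κ`, and there `log P_a z = log (1 - ‖a‖²) - 2 log ‖1 - conj a * z‖`. The right-hand side is
harmonic on a neighbourhood of the closed disk, so the Poisson integral formula computes the
average of `P_a * log P_a` as its value at `z = a`, namely `-log (1 - ‖a‖²)`.
-/

open Real MeasureTheory intervalIntegral
open Complex ComplexConjugate InnerProductSpace Metric

lemma one_sub_conj_mul_ne_zero {a z : ℂ} (ha : ‖a‖ < 1) (hz : ‖z‖ ≤ 1) :
    1 - conj a * z ≠ 0 := by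
  intro h
  have : ‖conj a * z‖ < 1 := by
    rw [norm_mul, RCLike.norm_conj]
    nlinarith [norm_nonneg a, norm_nonneg z]
  rw [← sub_eq_zero.1 h, norm_one] at this
  exact this.false

lemma norm_sub_eq_norm_one_sub_conj_mul {a z : ℂ} (hz : ‖z‖ = 1) :
    ‖z - a‖ = ‖1 - conj a * z‖ := by
  have hzz : z * conj z = 1 := by
    rw [mul_conj, normSq_eq_norm_sq, hz]; simp
  calc ‖z - a‖ = ‖z‖ * ‖conj (z - a)‖ := by rw [hz, RCLike.norm_conj, one_mul]
    _ = ‖1 - conj a * z‖ := by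
      rw [← norm_mul, map_sub]; congr 1; linear_combination hzz

lemma log_poissonKernel_of_norm_eq_one {a z : ℂ} (ha : ‖a‖ < 1) (hz : ‖z‖ = 1) :
    Real.log (poissonKernel 0 a z) = Real.log (1 - ‖a‖ ^ 2) - 2 * Real.log ‖1 - conj a * z‖ := by
  have hne : ‖1 - conj a * z‖ ≠ 0 := norm_ne_zero_iff.2 (one_sub_conj_mul_ne_zero ha hz.le)
  have hpos : 1 - ‖a‖ ^ 2 ≠ 0 := by nlinarith [norm_nonneg a]
  simp only [poissonKernel_def, sub_zero, hz, one_pow, norm_sub_eq_norm_one_sub_conj_mul hz]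
  rw [Real.log_div hpos (pow_ne_zero 2 hne), Real.log_pow]
  push_cast; ring

lemma harmonicOnNhd_log_norm_one_sub_conj_mul {a : ℂ} (ha : ‖a‖ < 1) :
    HarmonicOnNhd (fun z ↦ Real.log ‖1 - conj a * z‖) (closedBall 0 1) := fun z hz ↦
  AnalyticAt.harmonicAt_log_norm (by fun_prop)
    (one_sub_conj_mul_ne_zero ha (mem_closedBall_zero_iff.1 hz))

theorem circleAverage_poissonKernel_mul_log {a : ℂ} (ha : ‖a‖ < 1) :
    Real.circleAverage (fun z ↦ poissonKernel 0 a z * Real.log (poissonKernel 0 a z)) 0 1 =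
      -Real.log (1 - ‖a‖ ^ 2) := by
  have hu : HarmonicOnNhd (fun z ↦ Real.log (1 - ‖a‖ ^ 2) - 2 * Real.log ‖1 - conj a * z‖)
      (closedBall 0 1) :=
    (harmonicOnNhd_const _).sub ((harmonicOnNhd_log_norm_one_sub_conj_mul ha).const_smul (c := 2))
  calc _ = Real.circleAverage
        (poissonKernel 0 a • fun z ↦ Real.log (1 - ‖a‖ ^ 2) - 2 * Real.log ‖1 - conj a * z‖) 0 1 :=
        circleAverage_congr_sphere fun z hz ↦ by
          rw [abs_one, mem_sphere_zero_iff_norm] at hz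
          simp [log_poissonKernel_of_norm_eq_one ha hz]
    _ = Real.log (1 - ‖a‖ ^ 2) - 2 * Real.log ‖1 - conj a * a‖ :=
        hu.circleAverage_poissonKernel_smul (mem_ball_zero_iff.2 ha)
    _ = -Real.log (1 - ‖a‖ ^ 2) := by
        have hnorm : ‖1 - conj a * a‖ = 1 - ‖a‖ ^ 2 := by
          rw [mul_comm, mul_conj, normSq_eq_norm_sq, ← ofReal_one, ← ofReal_sub, norm_real,
            Real.norm_of_nonneg (by nlinarith [norm_nonneg a])]
        rw [hnorm]; ring

lemma poissonKernel_zero_ofReal_circleMap (r θ : ℝ) :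
    poissonKernel 0 r (circleMap 0 1 θ) = (1 - r ^ 2) / (1 + r ^ 2 - 2 * r * Real.cos θ) := by
  rw [poissonKernel_def, sub_zero, sub_zero, norm_circleMap_zero, abs_one, norm_real,
    Real.norm_eq_abs, sq_abs, ← normSq_eq_norm_sq, normSq_apply]
  simp only [one_pow, circleMap, ofReal_one, one_mul, zero_add, sub_re, exp_ofReal_mul_I_re,
    ofReal_re, sub_im, exp_ofReal_mul_I_im, ofReal_im, sub_zero]
  congr 1
  linear_combination Real.sin_sq_add_cos_sq θ

/-- For every real `κ` with `0 ≤ κ < 1`,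
`(1/(2π)) ∫₀^{2π} w κ θ * log (w κ θ) dθ = -log (1 - κ²)`, where
`w κ θ = (1 - κ²) / (1 + κ² - 2 κ cos θ)`: the Kullback–Leibler divergence of the
wrapped Cauchy distribution with concentration `κ` from the uniform distribution
on the circle. -/
theorem kl_wrapped_cauchy (κ : ℝ) (hκ0 : 0 ≤ κ) (hκ1 : κ < 1) :
    (1 / (2 * π)) * ∫ θ in (0 : ℝ)..(2 * π),
        ((1 - κ ^ 2) / (1 + κ ^ 2 - 2 * κ * Real.cos θ)) *
          Real.log ((1 - κ ^ 2) / (1 + κ ^ 2 - 2 * κ * Real.cos θ)) =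
      -Real.log (1 - κ ^ 2) := by
  have hκ : ‖(κ : ℂ)‖ = κ := by rw [norm_real, Real.norm_of_nonneg hκ0]
  have h := circleAverage_poissonKernel_mul_log (a := κ) (hκ.symm ▸ hκ1)
  simpa only [Real.circleAverage_def, poissonKernel_zero_ofReal_circleMap, hκ, one_div,
    smul_eq_mul] using h
end

section
/- Let L be a real symmetric positive semidefinite n×n matrix and let x ∈ ℝⁿ. Then the limit as t → ∞ of exp(−t L) · x exists and equals the orthogonal projection (with respect to the standard Euclidean inner product on ℝⁿ) of x onto the kernel of L. -/
/-!
Diagonalise `L` in an orthonormal eigenbasis `(bᵢ)` with eigenvalues `μᵢ ≥ 0`. Then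
`exp (-t L) x = ∑ e^{-t μᵢ} ⟪bᵢ, x⟫ bᵢ`, and `e^{-t μᵢ}` tends to `1` if `μᵢ = 0` and to `0`
otherwise, so the flow converges to `∑_{μᵢ = 0} ⟪bᵢ, x⟫ bᵢ`. Since `L` is symmetric, its kernel is
orthogonal to every eigenvector with `μᵢ ≠ 0`, which makes this sum the orthogonal projection of
`x` onto `ker L`.
-/

open Matrix Filter Finset

open scoped Norms.Operator in
theorem Matrix.exp_mulVec_of_mulVec_eq_smul {𝕂 m : Type*} [RCLike 𝕂] [Fintype m] [DecidableEq m]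
    {A : Matrix m m 𝕂} {v : m → 𝕂} {c : 𝕂} (h : A *ᵥ v = c • v) :
    NormedSpace.exp A *ᵥ v = NormedSpace.exp c • v := by
  have hpow (k : ℕ) : A ^ k *ᵥ v = c ^ k • v := by
    induction k with
    | zero => simp
    | succ k ih => rw [pow_succ', ← mulVec_mulVec, ih, mulVec_smul, h, smul_smul, pow_succ]
  have hA := (NormedSpace.exp_series_hasSum_exp' (𝕂 := 𝕂) A).map (mulVec.addMonoidHomLeft v)
    (continuous_id.matrix_mulVec continuous_const)
  have hc := (NormedSpace.exp_series_hasSum_exp' (𝕂 := 𝕂) c).smul_const v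
  refine hA.unique ?_
  simpa [mulVec.addMonoidHomLeft, Function.comp_def, smul_mulVec, hpow, smul_smul] using hc

theorem LinearMap.IsSymmetric.starProjection_ker_eq_sum {𝕜 E ι : Type*} [RCLike 𝕜]
    [NormedAddCommGroup E] [InnerProductSpace 𝕜 E] [FiniteDimensional 𝕜 E] [Fintype ι]
    {T : E →ₗ[𝕜] E} (hT : T.IsSymmetric) (b : OrthonormalBasis ι 𝕜 E) {μ : ι → ℝ}
    (hb : ∀ i, T (b i) = (μ i : 𝕜) • b i) (x : E) :
    (LinearMap.ker T).starProjection x = ∑ i with μ i = 0, inner 𝕜 (b i) x • b i := by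
  have inner_eq_zero (i : ι) (hi : μ i ≠ 0) (w : E) (hw : w ∈ LinearMap.ker T) :
      inner 𝕜 (b i) w = 0 := by
    have : (μ i : 𝕜) * inner 𝕜 (b i) w = 0 := by
      rw [← RCLike.conj_ofReal, ← inner_smul_left, ← hb, hT, LinearMap.mem_ker.1 hw,
        inner_zero_right]
    exact (mul_eq_zero.1 this).resolve_left (by exact_mod_cast hi)
  refine Submodule.eq_starProjection_of_mem_of_inner_eq_zero ?_ fun w hw => ?_
  · refine Submodule.sum_mem _ fun i hi => Submodule.smul_mem _ _ ?_
    rw [LinearMap.mem_ker, hb, (mem_filter.1 hi).2, RCLike.ofReal_zero, zero_smul]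
  · have split := sum_filter_add_sum_filter_not univ (fun i => μ i = 0)
      fun i => inner 𝕜 (b i) x • b i
    rw [b.sum_repr'] at split
    rw [← eq_sub_of_add_eq' split, sum_inner]
    refine sum_eq_zero fun i hi => ?_
    rw [inner_smul_left, inner_eq_zero i (mem_filter.1 hi).2 w hw, mul_zero]

theorem Real.tendsto_exp_neg_mul_smul_atTop {E : Type*} [AddCommGroup E] [Module ℝ E]
    [TopologicalSpace E] [ContinuousSMul ℝ E] {μ : ℝ} (hμ : 0 ≤ μ) (v : E) :
    Tendsto (fun t => Real.exp (-(t * μ)) • v) atTop (nhds (if μ = 0 then v else 0)) := by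
  rcases hμ.eq_or_lt with rfl | hμ
  · simpa using tendsto_const_nhds
  · have := (tendsto_exp_atBot.comp (tendsto_neg_atTop_atBot.comp
      (tendsto_id.atTop_mul_const hμ))).smul_const v
    simpa [hμ.ne'] using this

namespace Matrix.IsHermitian

variable {ι : Type*} [Fintype ι] [DecidableEq ι]

theorem toEuclideanLin_eigenvectorBasis {𝕜 : Type*} [RCLike 𝕜] {A : Matrix ι ι 𝕜}
    (hA : A.IsHermitian) (i : ι) :
    toEuclideanLin A (hA.eigenvectorBasis i) = (hA.eigenvalues i : 𝕜) • hA.eigenvectorBasis i := by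
  rw [toLpLin_apply, mulVec_eigenvectorBasis, RCLike.real_smul_eq_coe_smul (K := 𝕜)]
  rfl

variable {L : Matrix ι ι ℝ}

theorem toEuclideanLin_exp_neg_smul_eigenvectorBasis (hL : L.IsHermitian) (t : ℝ) (i : ι) :
    toEuclideanLin (NormedSpace.exp (-(t • L))) (hL.eigenvectorBasis i) =
      Real.exp (-(t * hL.eigenvalues i)) • hL.eigenvectorBasis i := by
  have h : (-(t • L)) *ᵥ hL.eigenvectorBasis i =
      -(t * hL.eigenvalues i) • hL.eigenvectorBasis i := by
    rw [neg_mulVec, smul_mulVec, mulVec_eigenvectorBasis, smul_smul, neg_smul]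
  rw [toLpLin_apply, exp_mulVec_of_mulVec_eq_smul h, ← Real.exp_eq_exp_ℝ]
  rfl

theorem toEuclideanLin_exp_neg_smul_eq_sum (hL : L.IsHermitian) (t : ℝ) (x : EuclideanSpace ℝ ι) :
    toEuclideanLin (NormedSpace.exp (-(t • L))) x =
      ∑ i, Real.exp (-(t * hL.eigenvalues i)) •
        (inner ℝ (hL.eigenvectorBasis i) x • hL.eigenvectorBasis i) := by
  conv_lhs => rw [← hL.eigenvectorBasis.sum_repr' x]
  simp only [map_sum, map_smul, hL.toEuclideanLin_exp_neg_smul_eigenvectorBasis]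
  exact sum_congr rfl fun i _ => smul_comm _ _ _

end Matrix.IsHermitian

/-- Let `L` be a real symmetric positive semidefinite `n × n` matrix and `x ∈ ℝⁿ`
(with the standard Euclidean inner product). Then `exp (-t L) x` converges as `t → ∞`
to the orthogonal projection of `x` onto the kernel of `L`. -/
theorem matrix_heat_flow_tendsto_proj_ker (n : ℕ) (L : Matrix (Fin n) (Fin n) ℝ)
    (hsymm : Lᵀ = L) (hpsd : ∀ v : Fin n → ℝ, 0 ≤ v ⬝ᵥ (L *ᵥ v))
    (x : EuclideanSpace ℝ (Fin n)) :
    Tendsto (fun t : ℝ => Matrix.toEuclideanLin (NormedSpace.exp (-(t • L))) x)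
      atTop
      (nhds ((Submodule.orthogonalProjectionOnto (LinearMap.ker (Matrix.toEuclideanLin L)) x :
        EuclideanSpace ℝ (Fin n)))) := by
  have hL : L.IsHermitian := by rwa [IsHermitian, conjTranspose_eq_transpose_of_trivial]
  have hμ : ∀ i, 0 ≤ hL.eigenvalues i :=
    (PosSemidef.of_dotProduct_mulVec_nonneg hL fun v => by simpa using hpsd v).eigenvalues_nonneg
  rw [← Submodule.starProjection_apply,
    (isSymmetric_toEuclideanLin_iff.mpr hL).starProjection_ker_eq_sum hL.eigenvectorBasis
      hL.toEuclideanLin_eigenvectorBasis, sum_filter]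
  simp only [hL.toEuclideanLin_exp_neg_smul_eq_sum]
  exact tendsto_finsetSum _ fun i _ => Real.tendsto_exp_neg_mul_smul_atTop (hμ i) _
end
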